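/- Let w ∈ W_n, let l = ℓ_t(w), and let 1 ≤ i_1 < ⋯ < i_l ≤ n be the unique sequence such that α_w a_l = r_{i_1} ⋯ r_{i_l}. Then α_{w_n w} a_{n−l} = r_{j_1} ⋯ r_{j_{n−l}}, where 1 ≤ j_1 < ⋯ < j_{n−l} ≤ n is the sequence such that {i_1, …, i_l} ∪ {j_1, …, j_{n−l}} = {1, …, n}. -/

import Mathlib

/-!
Common setup: the Weyl group `W n` of type `B_n`, realized as the group of
permutations `w` of `I_n = {±1, …, ±n}` (inside `Equiv.Perm ℤ`, fixing every
integer of absolute value `> n`) such that `w (-i) = - w i` for all `i`.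
-/

namespace TypeB

/-- The generator `t = (1, -1)`. -/
def t : Equiv.Perm ℤ := Equiv.swap 1 (-1)

/-- The generator `s i = (i, i+1)(-i, -(i+1))` (meaningful for `1 ≤ i`). -/
def s (i : ℕ) : Equiv.Perm ℤ :=
  Equiv.swap (i : ℤ) ((i : ℤ) + 1) * Equiv.swap (-(i : ℤ)) (-((i : ℤ) + 1))

/-- The generating set `S_n = {t, s_1, …, s_{n-1}}`. -/
def gens (n : ℕ) : Set (Equiv.Perm ℤ) :=
  {t} ∪ {x | ∃ i : ℕ, 1 ≤ i ∧ i < n ∧ x = s i}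

/-- The Weyl group `W_n` of type `B_n`, as a subgroup of `Equiv.Perm ℤ`:
permutations `w` with `w (-i) = - (w i)` for all `i` and fixing all `i` with `|i| > n`. -/
def W (n : ℕ) : Subgroup (Equiv.Perm ℤ) where
  carrier := {w | (∀ i : ℤ, w (-i) = - w i) ∧ ∀ i : ℤ, (n : ℤ) < |i| → w i = i}
  one_mem' := ⟨fun _ => rfl, fun _ _ => rfl⟩
  mul_mem' := by
    rintro u v ⟨hu1, hu2⟩ ⟨hv1, hv2⟩
    refine ⟨fun i => ?_, fun i hi => ?_⟩
    · simp only [Equiv.Perm.mul_apply, hv1, hu1]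
    · simp only [Equiv.Perm.mul_apply, hv2 i hi, hu2 i hi]
  inv_mem' := by
    rintro u ⟨hu1, hu2⟩
    refine ⟨fun i => ?_, fun i hi => ?_⟩
    · apply u.injective
      rw [(show ∀ x, u (u⁻¹ x) = x from fun x => Equiv.apply_symm_apply u x), hu1, (show ∀ x, u (u⁻¹ x) = x from fun x => Equiv.apply_symm_apply u x)]
    · apply u.injective
      rw [(show ∀ x, u (u⁻¹ x) = x from fun x => Equiv.apply_symm_apply u x), hu2 i hi]

/-- The length of `w` with respect to the generating set `S_n`. -/
noncomputable def len (n : ℕ) (w : Equiv.Perm ℤ) : ℕ :=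
  sInf {k | ∃ l : List (Equiv.Perm ℤ), (∀ x ∈ l, x ∈ gens n) ∧ l.prod = w ∧ l.length = k}

/-- `l` is a reduced expression for `w` with respect to `S_n`. -/
def IsReduced (n : ℕ) (w : Equiv.Perm ℤ) (l : List (Equiv.Perm ℤ)) : Prop :=
  (∀ x ∈ l, x ∈ gens n) ∧ l.prod = w ∧ l.length = len n w

/-- `ℓ_t w`: the number of occurrences of `t` in a reduced expression of `w`
(independent of the chosen reduced expression). -/
noncomputable def lent (n : ℕ) (w : Equiv.Perm ℤ) : ℕ :=
  letI : DecidableEq (Equiv.Perm ℤ) := Classical.decEq _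
  sInf {m | ∃ l, IsReduced n w l ∧ l.count t = m}

/-- `r 1 = t` and `r (i+1) = s i * r i`. -/
def r : ℕ → Equiv.Perm ℤ
  | 0 => 1
  | 1 => t
  | (i + 2) => s (i + 1) * r (i + 1)

/-- `t_1 = t` and `t_{i+1} = s_i * t_i * s_i`. -/
def tperm : ℕ → Equiv.Perm ℤ
  | 0 => 1
  | 1 => t
  | (i + 2) => s (i + 1) * tperm (i + 1) * s (i + 1)

/-- `a l = r 1 * r 2 * ⋯ * r l`, with `a 0 = 1`. -/
def a : ℕ → Equiv.Perm ℤ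
  | 0 => 1
  | (l + 1) => a l * r (l + 1)

/-- The symmetric group `𝔖_n`: the subgroup generated by `s_1, …, s_{n-1}`. -/
def Sym (n : ℕ) : Subgroup (Equiv.Perm ℤ) :=
  Subgroup.closure {x | ∃ i : ℕ, 1 ≤ i ∧ i < n ∧ x = s i}

/-- The parabolic subgroup `𝔖_{l,n-l}`: generated by `{s_1, …, s_{n-1}} \ {s_l}`. -/
def SymP (n l : ℕ) : Subgroup (Equiv.Perm ℤ) :=
  Subgroup.closure {x | ∃ i : ℕ, 1 ≤ i ∧ i < n ∧ i ≠ l ∧ x = s i}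

/-- `Y_{l,n-l}`: elements of `𝔖_n` of minimal length in their coset `w 𝔖_{l,n-l}`. -/
def Y (n l : ℕ) : Set (Equiv.Perm ℤ) :=
  {w | w ∈ Sym n ∧ ∀ u ∈ SymP n l, len n w ≤ len n (w * u)}

/-- The subgroup `𝔖_{[i,j]}` generated by `s_i, …, s_{j-1}`. -/
def SymI (i j : ℕ) : Subgroup (Equiv.Perm ℤ) :=
  Subgroup.closure {x | ∃ k : ℕ, i ≤ k ∧ k < j ∧ x = s k}

/-- The function reversing the interval `[i,j]` (and `[-j,-i]`), for `1 ≤ i`. -/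
def revFun (i j : ℤ) : ℤ → ℤ := fun k =>
  if 1 ≤ i ∧ i ≤ k ∧ k ≤ j then i + j - k
  else if 1 ≤ i ∧ -j ≤ k ∧ k ≤ -i then -(i + j) - k
  else k

lemma revFun_involutive (i j : ℤ) : Function.Involutive (revFun i j) := by
  intro k
  unfold revFun
  split_ifs <;> omega

/-- `σ_{[i,j]}`: the longest element of `𝔖_{[i,j]}`, i.e. the order-reversing
permutation of the interval `[i,j]` (extended to `I_n` by `w(-k) = -w(k)`). -/
def sigmaI (i j : ℕ) : Equiv.Perm ℤ := (revFun_involutive (i : ℤ) (j : ℤ)).toPerm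

/-- `σ_{l,n-l}`: the longest element of `𝔖_{l,n-l} = 𝔖_{[1,l]} × 𝔖_{[l+1,n]}`. -/
def sigmaLL (n l : ℕ) : Equiv.Perm ℤ := sigmaI 1 l * sigmaI (l + 1) n

/-- The function negating all `k` with `|k| ≤ n`. -/
def negnFun (n : ℤ) : ℤ → ℤ := fun k => if -n ≤ k ∧ k ≤ n then -k else k

lemma negnFun_involutive (n : ℤ) : Function.Involutive (negnFun n) := by
  intro k
  unfold negnFun
  split_ifs <;> omega

/-- `w_n`: the longest element of `W_n`; as a permutation, `w_n i = -i` for `|i| ≤ n`. -/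
def wlong (n : ℕ) : Equiv.Perm ℤ := (negnFun_involutive (n : ℤ)).toPerm

/-- `c_I = s_{i_1} s_{i_2} ⋯ s_{i_k}` for `I = {i_1 < i_2 < ⋯ < i_k}`. -/
def cElt (I : Finset ℕ) : Equiv.Perm ℤ := ((I.sort (· ≤ ·)).map s).prod

/-- `d_I = s_{i_k} ⋯ s_{i_2} s_{i_1}` for `I = {i_1 < i_2 < ⋯ < i_k}`. -/
def dElt (I : Finset ℕ) : Equiv.Perm ℤ := (((I.sort (· ≤ ·)).map s).reverse).prod

/-- `X_n^{(m)}`: elements of `W_n` of minimal length in their coset `w W_m`. -/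
def X (n m : ℕ) : Set (Equiv.Perm ℤ) :=
  {w | w ∈ W n ∧ ∀ u ∈ W m, len n w ≤ len n (w * u)}

/-- Bruhat order: `x ≤ y` iff some reduced expression of `y` contains a subword
which is a reduced expression of `x`. -/
def BruhatLE (n : ℕ) (x y : Equiv.Perm ℤ) : Prop :=
  ∃ ly, IsReduced n y ly ∧ ∃ lx, lx.Sublist ly ∧ IsReduced n x lx

/-- Strict Bruhat order. -/
def BruhatLT (n : ℕ) (x y : Equiv.Perm ℤ) : Prop := BruhatLE n x y ∧ x ≠ y

/-- `D_i(W_n)`: the set of `x` such that exactly one of `s_i, s_{i+1}` is a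
(right) descent of `x`. -/
def Dset (n i : ℕ) : Set (Equiv.Perm ℤ) :=
  {x | Xor' (len n (x * s i) < len n x) (len n (x * s (i + 1)) < len n x)}

open Classical in
/-- `γ_i x`: the unique element of `{x s_i, x s_{i+1}} ∩ D_i(W_n)` (for `x ∈ D_i(W_n)`). -/
noncomputable def gamma (n i : ℕ) (x : Equiv.Perm ℤ) : Equiv.Perm ℤ :=
  if x * s i ∈ Dset n i then x * s i else x * s (i + 1)

/-- `E_m^{(r)}`: the set of `w ∈ W_m` such that `|w 1| > |w i|` for `2 ≤ i ≤ r+2`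
and `(w 2, …, w (r+2))` is a shuffle of a positive decreasing sequence and a
negative increasing sequence. -/
def E (m ρ : ℕ) : Set (Equiv.Perm ℤ) :=
  {w | w ∈ W m ∧ (∀ i : ℕ, 2 ≤ i → i ≤ ρ + 2 → |w (i : ℤ)| < |w (1 : ℤ)|) ∧
    ∀ i j : ℕ, 2 ≤ i → i < j → j ≤ ρ + 2 →
      (0 < w (i : ℤ) → 0 < w (j : ℤ) → w (j : ℤ) < w (i : ℤ)) ∧
      (w (i : ℤ) < 0 → w (j : ℤ) < 0 → w (i : ℤ) < w (j : ℤ))}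

/-- The product `r_{i_1} ⋯ r_{i_l}` for a sequence `i : Fin l → ℕ`. -/
def prodR {l : ℕ} (i : Fin l → ℕ) : Equiv.Perm ℤ := (List.ofFn fun k => r (i k)).prod

/-- `(l, α, β, σ)` is a decomposition of `w` as in the decomposition lemma:
`l ≤ n`, `α, β ∈ Y_{l,n-l}`, `σ ∈ 𝔖_{l,n-l}` and `w = α a_l σ β⁻¹`. -/
def IsDecomp (n : ℕ) (w : Equiv.Perm ℤ) (l : ℕ) (α β σ : Equiv.Perm ℤ) : Prop :=
  l ≤ n ∧ α ∈ Y n l ∧ β ∈ Y n l ∧ σ ∈ SymP n l ∧ w = α * a l * σ * β⁻¹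

/-!
An element of `W n` whose window `v 1 < v 2 < ⋯ < v n` is increasing is determined by the set
of absolute values of its negative entries. Both sides of the identity have increasing windows:
`r_{j_1} ⋯ r_{j_{n-l}}` by a direct computation, and `α' a_{n-l}` because `α'` is a minimal coset
representative, which via the explicit length formula means that `α'` increases on `[1, n-l]` and
on `[n-l+1, n]`. The negative set of `α a_l σ β⁻¹` is that of `α a_l`, since `σ β⁻¹` permutes
`{1, …, n}`; for `r_{i_1} ⋯ r_{i_l}` it is `{i_1, …, i_l}`, and left multiplication by `w_n`
replaces it by its complement `{j_1, …, j_{n-l}}`, the negative set of `r_{j_1} ⋯ r_{j_{n-l}}`.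
-/

open Set
open scoped Pointwise

lemma t_apply (x : ℤ) : t x = if x = 1 then -1 else if x = -1 then 1 else x :=
  Equiv.swap_apply_def _ _ _

lemma s_apply {i : ℕ} (hi : 1 ≤ i) (x : ℤ) :
    s i x = if x = i then (i : ℤ) + 1 else if x = i + 1 then (i : ℤ)
      else if x = -(i : ℤ) then -((i : ℤ) + 1) else if x = -((i : ℤ) + 1) then -(i : ℤ) else x := by
  simp only [s, Equiv.Perm.mul_apply, Equiv.swap_apply_def]
  split_ifs <;> omega

lemma r_apply {k : ℕ} (hk : 1 ≤ k) (x : ℤ) :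
    r k x = if x = 1 then -(k : ℤ) else if 2 ≤ x ∧ x ≤ k then x - 1
      else if x = -1 then k else if -(k : ℤ) ≤ x ∧ x ≤ -2 then x + 1 else x := by
  induction k, hk using Nat.le_induction generalizing x with
  | base => simp only [r, t_apply]; split_ifs <;> omega
  | succ k hk ih =>
    obtain ⟨k, rfl⟩ := Nat.exists_eq_add_of_le' hk
    simp only [r, Equiv.Perm.mul_apply, ih, s_apply (Nat.le_add_left 1 k)]
    push_cast
    split_ifs <;> omega

lemma a_apply (m : ℕ) (x : ℤ) :
    a m x = if 1 ≤ x ∧ x ≤ m then x - (m + 1)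
      else if -(m : ℤ) ≤ x ∧ x ≤ -1 then x + (m + 1) else x := by
  induction m generalizing x with
  | zero => simp only [a, Equiv.Perm.one_apply]; split_ifs <;> omega
  | succ m ih =>
    simp only [a, Equiv.Perm.mul_apply, r_apply (Nat.le_add_left 1 m), ih]
    push_cast
    split_ifs <;> omega

lemma wlong_apply (n : ℕ) (x : ℤ) : wlong n x = if -(n : ℤ) ≤ x ∧ x ≤ n then -x else x := rfl

lemma mem_W_iff {n : ℕ} {w : Equiv.Perm ℤ} :
    w ∈ W n ↔ (∀ x, w (-x) = -w x) ∧ ∀ x, (x < -(n : ℤ) ∨ n < x) → w x = x := by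
  simp only [W, Subgroup.mem_mk, Submonoid.mem_mk, Subsemigroup.mem_mk, mem_ofPred_eq, lt_abs]
  constructor <;> rintro ⟨h₁, h₂⟩ <;> refine ⟨h₁, fun x hx => h₂ x (by omega)⟩

lemma t_mem_W {n : ℕ} (hn : 1 ≤ n) : t ∈ W n :=
  mem_W_iff.2 ⟨fun x => by simp only [t_apply]; split_ifs <;> omega,
    fun x hx => by simp only [t_apply]; split_ifs <;> omega⟩

lemma s_mem_W {i n : ℕ} (hi : 1 ≤ i) (hin : i < n) : s i ∈ W n :=
  mem_W_iff.2 ⟨fun x => by simp only [s_apply hi]; split_ifs <;> omega,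
    fun x hx => by simp only [s_apply hi]; split_ifs <;> omega⟩

lemma r_mem_W {k n : ℕ} (hkn : k ≤ n) : r k ∈ W n := by
  rcases Nat.eq_zero_or_pos k with rfl | hk
  · exact one_mem _
  exact mem_W_iff.2 ⟨fun x => by simp only [r_apply hk]; split_ifs <;> omega,
    fun x hx => by simp only [r_apply hk]; split_ifs <;> omega⟩

lemma a_mem_W {m n : ℕ} (hmn : m ≤ n) : a m ∈ W n :=
  mem_W_iff.2 ⟨fun x => by simp only [a_apply]; split_ifs <;> omega,
    fun x hx => by simp only [a_apply]; split_ifs <;> omega⟩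

lemma gens_subset_W {n : ℕ} (hn : 1 ≤ n) : gens n ⊆ W n := by
  rintro g (rfl | ⟨i, hi, hin, rfl⟩)
  exacts [t_mem_W hn, s_mem_W hi hin]

lemma Sym_le_W (n : ℕ) : Sym n ≤ W n :=
  (Subgroup.closure_le _).2 fun _ ⟨_, hi, hin, hg⟩ => hg ▸ s_mem_W hi hin

lemma SymP_le_Sym (n l : ℕ) : SymP n l ≤ Sym n :=
  Subgroup.closure_mono fun _ ⟨i, hi, hin, _, hg⟩ => ⟨i, hi, hin, hg⟩

section WeylGroup

variable {n : ℕ} {w : Equiv.Perm ℤ}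

lemma apply_zero_of_mem_W (hw : w ∈ W n) : w 0 = 0 := by
  have := hw.1 0
  rw [neg_zero] at this
  omega

lemma apply_ne_zero_of_mem_W (hw : w ∈ W n) {x : ℤ} (hx : x ≠ 0) : w x ≠ 0 := fun h =>
  hx (w.injective (h.trans (apply_zero_of_mem_W hw).symm))

lemma abs_apply_le_of_mem_W (hw : w ∈ W n) {x : ℤ} (hx : |x| ≤ n) : |w x| ≤ n := by
  by_contra! h
  have := (inv_mem hw).2 (w x) h
  rw [show w⁻¹ (w x) = x from w.symm_apply_apply x] at this
  rw [← this] at h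
  omega

lemma eq_of_mem_W_of_eqOn {u v : Equiv.Perm ℤ} (hu : u ∈ W n) (hv : v ∈ W n)
    (h : EqOn u v (Icc 1 n)) : u = v := by
  ext x
  rcases lt_trichotomy x 0 with hx | rfl | hx
  · by_cases hxn : -n ≤ x
    · rw [← neg_neg x, hu.1, hv.1, h ⟨by omega, by omega⟩]
    · rw [(mem_W_iff.1 hu).2 x (by omega), (mem_W_iff.1 hv).2 x (by omega)]
  · rw [apply_zero_of_mem_W hu, apply_zero_of_mem_W hv]
  · by_cases hxn : x ≤ n
    · exact h ⟨hx, hxn⟩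
    · rw [(mem_W_iff.1 hu).2 x (by omega), (mem_W_iff.1 hv).2 x (by omega)]

end WeylGroup

lemma _root_.StrictMonoOn.eqOn_of_image_eq {α β : Type*} [LinearOrder α] [Preorder β] {f g : α → β}
    {s : Set α} (hs : s.Finite) (hf : StrictMonoOn f s) (hg : StrictMonoOn g s)
    (h : f '' s = g '' s) : EqOn f g s := by
  have : Finite s := hs.to_subtype
  have : WellFoundedLT s := Finite.to_wellFoundedLT
  have hfg := (hf.domRestrict.range_inj hg.domRestrict).1 (by simpa only [range_domRestrict])
  exact fun x hx => congrFun hfg ⟨x, hx⟩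

lemma strictMonoOn_Icc_of_lt_add_one {β : Type*} [Preorder β] {f : ℤ → β} {a b : ℤ}
    (h : ∀ p, a ≤ p → p + 1 ≤ b → f p < f (p + 1)) : StrictMonoOn f (Icc a b) :=
  strictMonoOn_of_lt_succ ordConnected_Icc fun p _ hp hp1 => by
    rw [Order.succ_eq_add_one] at hp1 ⊢
    exact h p hp.1 hp1.2

def negEntries (n : ℕ) (v : Equiv.Perm ℤ) : Set ℤ := {c ∈ Icc 1 (n : ℤ) | -c ∈ v '' Icc 1 n}

section Window

variable {n : ℕ} {u v : Equiv.Perm ℤ}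

lemma neg_mem_image_Icc_iff (hv : v ∈ W n) {c : ℤ} (hc : c ∈ Icc 1 (n : ℤ)) :
    -c ∈ v '' Icc 1 n ↔ c ∉ v '' Icc 1 n := by
  constructor
  · rintro ⟨x, hx, hvx⟩ ⟨y, hy, hvy⟩
    have := v.injective (show v (-x) = v y by rw [hv.1, hvx, hvy, neg_neg])
    exact absurd hy.1 (by rw [← this]; linarith [hx.1])
  · intro hc'
    have hvy : v (v⁻¹ c) = c := v.apply_symm_apply c
    have hy := abs_apply_le_of_mem_W (inv_mem hv) (x := c) (abs_le.2 ⟨by linarith [hc.1], hc.2⟩)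
    have hy0 : v⁻¹ c ≠ 0 := apply_ne_zero_of_mem_W (inv_mem hv) (by linarith [hc.1])
    rw [abs_le] at hy
    rcases hy0.lt_or_gt with hneg | hpos
    · exact ⟨-v⁻¹ c, ⟨by omega, by omega⟩, by rw [hv.1, hvy]⟩
    · exact absurd ⟨v⁻¹ c, ⟨hpos, hy.2⟩, hvy⟩ hc'

lemma image_Icc_subset_of_negEntries_eq (hu : u ∈ W n) (hv : v ∈ W n)
    (h : negEntries n u = negEntries n v) : u '' Icc 1 n ⊆ v '' Icc 1 n := by
  rintro _ ⟨z, hz, rfl⟩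
  have hbound := abs_le.1 (abs_apply_le_of_mem_W hu (x := z) (abs_le.2 ⟨by linarith [hz.1], hz.2⟩))
  have hne := apply_ne_zero_of_mem_W hu (x := z) (by linarith [hz.1])
  rcases hne.lt_or_gt with hneg | hpos
  · have hmem : -u z ∈ negEntries n u := ⟨⟨by omega, by omega⟩, by rw [neg_neg]; exact ⟨z, hz, rfl⟩⟩
    rw [h] at hmem
    simpa only [neg_neg] using hmem.2
  · have hc : u z ∈ Icc 1 (n : ℤ) := ⟨hpos, hbound.2⟩
    by_contra hnot
    have hmem : u z ∈ negEntries n v := ⟨hc, (neg_mem_image_Icc_iff hv hc).2 hnot⟩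
    rw [← h] at hmem
    exact (neg_mem_image_Icc_iff hu hc).1 hmem.2 ⟨z, hz, rfl⟩

lemma eq_of_strictMonoOn_of_negEntries_eq (hu : u ∈ W n) (hv : v ∈ W n)
    (hmu : StrictMonoOn u (Icc 1 n)) (hmv : StrictMonoOn v (Icc 1 n))
    (h : negEntries n u = negEntries n v) : u = v :=
  eq_of_mem_W_of_eqOn hu hv <| hmu.eqOn_of_image_eq (finite_Icc _ _) hmv <|
    (image_Icc_subset_of_negEntries_eq hu hv h).antisymm
      (image_Icc_subset_of_negEntries_eq hv hu h.symm)

lemma eq_one_of_strictMonoOn (hu : u ∈ W n) (hmu : StrictMonoOn u (Icc 1 n)) (h1 : 0 < u 1) :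
    u = 1 := by
  refine eq_of_strictMonoOn_of_negEntries_eq hu (one_mem _) hmu (fun x _ y _ h => h) ?_
  have hpos : ∀ x ∈ Icc 1 (n : ℤ), 0 < u x := fun x hx =>
    h1.trans_le (hmu.monotoneOn ⟨le_rfl, hx.1.trans hx.2⟩ hx hx.1)
  ext c
  simp only [negEntries, mem_sep_iff, mem_image, Equiv.Perm.one_apply]
  constructor
  · rintro ⟨hc, x, hx, hux⟩
    linarith [hpos x hx, hc.1]
  · rintro ⟨hc, x, hx, rfl⟩
    linarith [hx.1, hc.1]

end Window

lemma t_mul_t : t * t = 1 := Equiv.swap_mul_self _ _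

lemma s_mul_s {p : ℕ} (hp : 1 ≤ p) : s p * s p = 1 := by
  ext x
  simp only [Equiv.Perm.mul_apply, s_apply hp, Equiv.Perm.one_apply]
  split_ifs <;> omega

/- Invariant under negating `x`, so that right multiplication by `t` only changes the number of
negative entries in `invB`. -/
def pairWeight (x y : ℤ) : ℕ := (if y < x then 1 else 0) + (if x + y < 0 then 1 else 0)

lemma pairWeight_neg_left (x y : ℤ) : pairWeight (-x) y = pairWeight x y := by
  unfold pairWeight
  split_ifs <;> omega

lemma pairWeight_swap_of_lt {x y : ℤ} (h : x < y) : pairWeight y x = pairWeight x y + 1 := by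
  unfold pairWeight
  split_ifs <;> omega

noncomputable def ltPairs (n : ℕ) : Finset (ℤ × ℤ) :=
  (Finset.Icc 1 (n : ℤ) ×ˢ Finset.Icc 1 (n : ℤ)).filter fun q => q.1 < q.2

lemma mem_ltPairs {n : ℕ} {q : ℤ × ℤ} : q ∈ ltPairs n ↔ 1 ≤ q.1 ∧ q.1 < q.2 ∧ q.2 ≤ n := by
  simp only [ltPairs, Finset.mem_filter, Finset.mem_product, Finset.mem_Icc]
  omega

/-- Björner–Brenti's length formula in type `B`: inversions and negative-sum pairs among
`w 1, …, w n`, plus the number of negative entries. -/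
noncomputable def invB (n : ℕ) (w : Equiv.Perm ℤ) : ℕ :=
  ∑ q ∈ ltPairs n, pairWeight (w q.1) (w q.2) + ((Finset.Icc 1 (n : ℤ)).filter (w · < 0)).card

section Length

variable {n : ℕ} {w : Equiv.Perm ℤ}

lemma invB_one (n : ℕ) : invB n 1 = 0 := by
  refine Nat.add_eq_zero_iff.2 ⟨Finset.sum_eq_zero fun q hq => ?_, ?_⟩
  · have := mem_ltPairs.1 hq
    rw [Equiv.Perm.one_apply, Equiv.Perm.one_apply, pairWeight, if_neg (by omega),
      if_neg (by omega), add_zero]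
  · refine Finset.card_eq_zero.2 (Finset.filter_eq_empty_iff.2 fun x hx => ?_)
    simp only [Finset.mem_Icc] at hx
    simp only [Equiv.Perm.one_apply]
    omega

lemma invB_mul_t (hn : 1 ≤ n) (hw : w ∈ W n) (h : 0 < w 1) : invB n (w * t) = invB n w + 1 := by
  have hpairs : ∑ q ∈ ltPairs n, pairWeight ((w * t) q.1) ((w * t) q.2)
      = ∑ q ∈ ltPairs n, pairWeight (w q.1) (w q.2) := by
    refine Finset.sum_congr rfl fun q hq => ?_
    obtain ⟨h1, h12, -⟩ := mem_ltPairs.1 hq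
    have ht2 : t q.2 = q.2 := by rw [t_apply]; split_ifs <;> omega
    rw [Equiv.Perm.mul_apply, Equiv.Perm.mul_apply, ht2]
    rcases h1.eq_or_lt with h1 | h1
    · rw [← h1, t_apply, if_pos rfl, hw.1, pairWeight_neg_left]
    · rw [t_apply, if_neg h1.ne', if_neg (by omega)]
  have hneg : (Finset.Icc 1 (n : ℤ)).filter ((w * t) · < 0)
      = insert 1 ((Finset.Icc 1 (n : ℤ)).filter (w · < 0)) := by
    ext x
    simp only [Finset.mem_insert, Finset.mem_filter, Finset.mem_Icc, Equiv.Perm.mul_apply, t_apply]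
    split_ifs with h1 h2
    · subst h1
      rw [hw.1]
      omega
    · omega
    · omega
  rw [invB, invB, hpairs, hneg, Finset.card_insert_of_notMem (by simp [h.not_gt])]
  ring

lemma invB_mul_s {p : ℕ} (hp : 1 ≤ p) (hpn : p < n) (h : w p < w (p + 1)) :
    invB n (w * s p) = invB n w + 1 := by
  have hmem : ((p : ℤ), (p : ℤ) + 1) ∈ ltPairs n := mem_ltPairs.2 ⟨by omega, by omega, by omega⟩
  have hsp : s p p = p + 1 ∧ s p (p + 1) = p := by simp only [s_apply hp]; split_ifs <;> omega
  have hrest : ∑ q ∈ (ltPairs n).erase (p, p + 1), pairWeight ((w * s p) q.1) ((w * s p) q.2)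
      = ∑ q ∈ (ltPairs n).erase (p, p + 1), pairWeight (w q.1) (w q.2) := by
    refine Finset.sum_equiv ((s p).prodCongr (s p)) (fun q => ?_) fun q _ => rfl
    simp only [Finset.mem_erase, mem_ltPairs, ne_eq, Prod.ext_iff, Equiv.prodCongr_apply,
      Prod.map_fst, Prod.map_snd, s_apply hp]
    split_ifs <;> omega
  have hneg : ((Finset.Icc 1 (n : ℤ)).filter ((w * s p) · < 0)).card
      = ((Finset.Icc 1 (n : ℤ)).filter (w · < 0)).card := by
    refine Finset.card_equiv (s p) fun x => ?_
    have : (1 ≤ x ∧ x ≤ n) ↔ (1 ≤ s p x ∧ s p x ≤ n) := by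
      simp only [s_apply hp]; split_ifs <;> omega
    rw [Finset.mem_filter, Finset.mem_filter, Finset.mem_Icc, Finset.mem_Icc, this,
      Equiv.Perm.mul_apply]
  rw [invB, invB, ← Finset.add_sum_erase _ _ hmem, ← Finset.add_sum_erase _ _ hmem, hrest, hneg,
    Equiv.Perm.mul_apply, Equiv.Perm.mul_apply, hsp.1, hsp.2, pairWeight_swap_of_lt h]
  ring

lemma invB_mul_t_of_neg (hn : 1 ≤ n) (hw : w ∈ W n) (h : w 1 < 0) :
    invB n (w * t) + 1 = invB n w := by
  have hwt1 : 0 < (w * t) 1 := by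
    rw [Equiv.Perm.mul_apply, t_apply, if_pos rfl, hw.1]
    omega
  rw [← invB_mul_t hn (mul_mem hw (t_mem_W hn)) hwt1, mul_assoc, t_mul_t, mul_one]

lemma invB_mul_s_of_gt {p : ℕ} (hp : 1 ≤ p) (hpn : p < n) (h : w (p + 1) < w p) :
    invB n (w * s p) + 1 = invB n w := by
  have hsp : s p p = p + 1 ∧ s p (p + 1) = p := by simp only [s_apply hp]; split_ifs <;> omega
  have hws : (w * s p) p < (w * s p) (p + 1) := by
    rw [Equiv.Perm.mul_apply, Equiv.Perm.mul_apply, hsp.1, hsp.2]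
    exact h
  rw [← invB_mul_s hp hpn hws, mul_assoc, s_mul_s hp, mul_one]

lemma invB_mul_gen_le (hn : 1 ≤ n) (hw : w ∈ W n) {g : Equiv.Perm ℤ} (hg : g ∈ gens n) :
    invB n (w * g) ≤ invB n w + 1 := by
  rcases hg with rfl | ⟨p, hp, hpn, rfl⟩
  · rcases (apply_ne_zero_of_mem_W hw one_ne_zero).lt_or_gt with h | h
    · linarith [invB_mul_t_of_neg hn hw h]
    · exact (invB_mul_t hn hw h).le
  · rcases lt_or_gt_of_ne (w.injective.ne (show (p : ℤ) ≠ p + 1 by omega)) with h | h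
    · exact (invB_mul_s hp hpn h).le
    · linarith [invB_mul_s_of_gt hp hpn h]

lemma invB_prod_le (hn : 1 ≤ n) (l : List (Equiv.Perm ℤ)) (hl : ∀ x ∈ l, x ∈ gens n) :
    invB n l.prod ≤ l.length := by
  induction l using List.reverseRecOn with
  | nil => simp [invB_one]
  | append_singleton l g ih =>
    have hl' : ∀ x ∈ l, x ∈ gens n := fun x hx => hl x (List.mem_append_left _ hx)
    have hlW : l.prod ∈ W n := Subgroup.list_prod_mem _ fun x hx => gens_subset_W hn (hl' x hx)
    rw [List.prod_append, List.prod_singleton, List.length_append, List.length_singleton]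
    linarith [invB_mul_gen_le hn hlW (hl g (List.mem_append_right _ (List.mem_singleton_self g))),
      ih hl']

lemma exists_word_length_invB (hn : 1 ≤ n) (hw : w ∈ W n) :
    ∃ l : List (Equiv.Perm ℤ), (∀ x ∈ l, x ∈ gens n) ∧ l.prod = w ∧ l.length = invB n w := by
  induction hN : invB n w using Nat.strong_induction_on generalizing w with
  | _ N ih =>
  have step : ∀ g ∈ gens n, g * g = 1 → invB n (w * g) + 1 = invB n w →
      ∃ l : List (Equiv.Perm ℤ), (∀ x ∈ l, x ∈ gens n) ∧ l.prod = w ∧ l.length = N := by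
    intro g hg hgg hdesc
    obtain ⟨l, hl, hprod, hlen⟩ := ih _ (by omega) (mul_mem hw (gens_subset_W hn hg)) rfl
    refine ⟨l ++ [g], fun x hx => ?_, ?_, ?_⟩
    · rcases List.mem_append.1 hx with hx | hx
      exacts [hl x hx, List.mem_singleton.1 hx ▸ hg]
    · rw [List.prod_append, List.prod_singleton, hprod, mul_assoc, hgg, mul_one]
    · rw [List.length_append, List.length_singleton, hlen]
      omega
  by_cases hdes : ∃ p, 1 ≤ p ∧ p < n ∧ w (p + 1) < w p
  · obtain ⟨p, hp, hpn, h⟩ := hdes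
    exact step (s p) (Or.inr ⟨p, hp, hpn, rfl⟩) (s_mul_s hp) (invB_mul_s_of_gt hp hpn h)
  by_cases h1 : w 1 < 0
  · exact step t (Or.inl rfl) t_mul_t (invB_mul_t_of_neg hn hw h1)
  push Not at hdes h1
  have hmono : StrictMonoOn w (Icc 1 n) := strictMonoOn_Icc_of_lt_add_one fun p hp hpn => by
    lift p to ℕ using (by omega)
    exact (hdes p (by exact_mod_cast hp) (by omega)).lt_of_ne (w.injective.ne (by omega))
  obtain rfl := eq_one_of_strictMonoOn hw hmono
    (h1.lt_of_ne' (apply_ne_zero_of_mem_W hw one_ne_zero))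
  exact ⟨[], by simp, rfl, by simp [← hN, invB_one]⟩

lemma len_eq_invB (hn : 1 ≤ n) (hw : w ∈ W n) : len n w = invB n w := by
  obtain ⟨l, hl, hprod, hlen⟩ := exists_word_length_invB hn hw
  refine le_antisymm (Nat.sInf_le ⟨l, hl, hprod, hlen⟩) ?_
  have hne : {k | ∃ l : List (Equiv.Perm ℤ), (∀ x ∈ l, x ∈ gens n) ∧ l.prod = w ∧ l.length = k}
      |>.Nonempty := ⟨_, l, hl, hprod, hlen⟩
  obtain ⟨l', hl', hprod', hlen'⟩ := Nat.sInf_mem hne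
  calc invB n w = invB n l'.prod := by rw [hprod']
    _ ≤ l'.length := invB_prod_le hn l' hl'
    _ = len n w := hlen'

end Length

lemma apply_lt_apply_add_one_of_mem_Y {n m : ℕ} {α : Equiv.Perm ℤ} (hα : α ∈ Y n m) {p : ℕ}
    (hp : 1 ≤ p) (hpn : p < n) (hpm : p ≠ m) : α p < α (p + 1) := by
  have hαW := Sym_le_W n hα.1
  refine (lt_or_gt_of_ne (α.injective.ne (show (p : ℤ) ≠ p + 1 by omega))).resolve_right
    fun h => ?_
  have hmin := hα.2 (s p) (Subgroup.subset_closure ⟨p, hp, hpn, hpm, rfl⟩)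
  rw [len_eq_invB (by omega) hαW, len_eq_invB (by omega) (mul_mem hαW (s_mem_W hp hpn))] at hmin
  linarith [invB_mul_s_of_gt hp hpn h]

lemma image_Icc_of_mem_Sym {n : ℕ} {π : Equiv.Perm ℤ} (hπ : π ∈ Sym n) :
    π '' Icc 1 n = Icc 1 (n : ℤ) := by
  suffices Sym n ≤ MulAction.stabilizer (Equiv.Perm ℤ) (Icc (1 : ℤ) n) by
    simpa only [MulAction.mem_stabilizer_iff, ← Set.image_smul, Equiv.Perm.smul_def] using this hπ
  refine (Subgroup.closure_le _).2 ?_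
  rintro _ ⟨i, hi, hin, rfl⟩
  rw [SetLike.mem_coe, MulAction.mem_stabilizer_iff, ← Set.image_smul]
  ext x
  simp only [Equiv.Perm.smul_def, mem_image, mem_Icc]
  constructor
  · rintro ⟨y, hy, rfl⟩
    simp only [s_apply hi]
    split_ifs <;> omega
  · intro hx
    refine ⟨s i x, ?_, by rw [← Equiv.Perm.mul_apply, s_mul_s hi, Equiv.Perm.one_apply]⟩
    simp only [s_apply hi]
    split_ifs <;> omega

section Decomp

variable {n l : ℕ} {w α β σ : Equiv.Perm ℤ}

lemma IsDecomp.image_Icc (h : IsDecomp n w l α β σ) : w '' Icc 1 n = (α * a l) '' Icc 1 n := by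
  obtain ⟨-, -, hβ, hσ, rfl⟩ := h
  rw [Equiv.Perm.coe_mul, image_comp, image_Icc_of_mem_Sym (inv_mem hβ.1), Equiv.Perm.coe_mul,
    image_comp, image_Icc_of_mem_Sym (SymP_le_Sym n l hσ)]

lemma IsDecomp.negEntries_eq (h : IsDecomp n w l α β σ) :
    negEntries n w = negEntries n (α * a l) := by
  simp only [negEntries, h.image_Icc]

end Decomp

lemma negEntries_wlong_mul {n : ℕ} {w : Equiv.Perm ℤ} (hw : w ∈ W n) :
    negEntries n (wlong n * w) = Icc 1 (n : ℤ) \ negEntries n w := by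
  have himage : (wlong n * w) '' Icc 1 n = Neg.neg '' (w '' Icc 1 n) := by
    rw [image_image]
    refine image_congr fun z hz => ?_
    have := abs_le.1 (abs_apply_le_of_mem_W hw (x := z) (abs_le.2 ⟨by linarith [hz.1], hz.2⟩))
    rw [Equiv.Perm.mul_apply, wlong_apply, if_pos this]
  ext c
  simp only [negEntries, mem_sep_iff, mem_sdiff, himage, image_neg_eq_neg, mem_neg, neg_neg]
  constructor
  · rintro ⟨hc, hmem⟩
    exact ⟨hc, fun h => (neg_mem_image_Icc_iff hw hc).1 h.2 hmem⟩
  · rintro ⟨hc, hmem⟩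
    exact ⟨hc, not_not.1 fun h => hmem ⟨hc, (neg_mem_image_Icc_iff hw hc).2 h⟩⟩

lemma strictMonoOn_mul_a_of_mem_Y {n m : ℕ} {α : Equiv.Perm ℤ} (hα : α ∈ Y n m) (hmn : m ≤ n) :
    StrictMonoOn (α * a m) (Icc 1 n) := by
  have hαW := Sym_le_W n hα.1
  have hpos : ∀ x ∈ Icc (1 : ℤ) n, 0 < α x := fun x hx =>
    (image_Icc_of_mem_Sym hα.1 ▸ mem_image_of_mem α hx).1
  have hadj : ∀ q : ℤ, 1 ≤ q → q < n → q ≠ m → α q < α (q + 1) := fun q hq hqn hqm => by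
    lift q to ℕ using (by omega)
    exact apply_lt_apply_add_one_of_mem_Y hα (by exact_mod_cast hq) (by omega) (by omega)
  refine strictMonoOn_Icc_of_lt_add_one fun p hp hpn => ?_
  simp only [Equiv.Perm.mul_apply, a_apply]
  rcases lt_trichotomy p m with hpm | rfl | hpm
  · rw [if_pos ⟨hp, hpm.le⟩, if_pos ⟨by omega, by omega⟩,
      show p - (m + 1) = -(m + 1 - p) by ring, show p + 1 - (m + 1) = -(m - p) by ring,
      hαW.1, hαW.1, neg_lt_neg_iff]
    simpa [show m - p + 1 = m + 1 - p by ring] using hadj (m - p) (by omega) (by omega) (by omega)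
  · rw [if_pos ⟨hp, le_rfl⟩, if_neg (by omega), if_neg (by omega), sub_add_cancel_left, hαW.1]
    linarith [hpos 1 ⟨le_rfl, by omega⟩, hpos (m + 1) ⟨by omega, hpn⟩]
  · rw [if_neg (by omega), if_neg (by omega), if_neg (by omega), if_neg (by omega)]
    exact hadj p hp (by omega) hpm.ne'

section ProdR

variable {n l : ℕ}

lemma prodR_zero (i : Fin 0 → ℕ) : prodR i = 1 := rfl

lemma prodR_succ (i : Fin (l + 1) → ℕ) : prodR i = r (i 0) * prodR (Fin.tail i) := by
  simp [prodR, List.ofFn_succ, Fin.tail]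

lemma prodR_mem_W {i : Fin l → ℕ} (hi : ∀ k, i k ≤ n) : prodR i ∈ W n :=
  Subgroup.list_prod_mem _ <| by simpa [List.mem_ofFn] using fun k => r_mem_W (hi k)

lemma _root_.StrictMono.fin_tail {i : Fin (l + 1) → ℕ} (hi : StrictMono i) :
    StrictMono (Fin.tail i) :=
  fun _ _ h => hi (Fin.succ_lt_succ_iff.2 h)

lemma prodR_apply_add {i : Fin l → ℕ} (hi : StrictMono i) {c : ℕ} (hc : ∀ k, c < i k) {x : ℤ}
    (hx : 1 ≤ x) (hxc : x ≤ c) : prodR i (l + x) = x := by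
  induction l generalizing c x with
  | zero => simp [prodR_zero]
  | succ l ih =>
    have htail : ∀ k, c + 1 < Fin.tail i k := fun k => by
      have := hi (Fin.succ_pos k)
      have := hc 0
      simp only [Fin.tail]
      omega
    have hrec := ih hi.fin_tail htail (x := x + 1) (by omega) (by omega)
    have := hc 0
    rw [prodR_succ, Equiv.Perm.mul_apply,
      show ((l + 1 : ℕ) : ℤ) + x = l + (x + 1) by push_cast; ring, hrec, r_apply (by omega)]
    split_ifs <;> omega

lemma prodR_apply_sub {i : Fin l → ℕ} (hi : StrictMono i) (hi1 : ∀ k, 1 ≤ i k) (k : Fin l) :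
    prodR i (l - k) = -(i k : ℤ) := by
  induction l with
  | zero => exact k.elim0
  | succ l ih =>
    have hlt : ∀ k, i 0 < Fin.tail i k := fun k => hi (Fin.succ_pos k)
    have hi1' : ∀ k, 1 ≤ Fin.tail i k := fun k => hi1 k.succ
    rw [prodR_succ, Equiv.Perm.mul_apply, r_apply (hi1 0)]
    refine Fin.cases ?_ (fun k => ?_) k
    · rw [Fin.val_zero, Nat.cast_zero, sub_zero, Nat.cast_succ,
        prodR_apply_add hi.fin_tail (c := 1) (fun k => by have := hi1 0; have := hlt k; omega)
          le_rfl le_rfl]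
      simp
    · have : (i 0 : ℤ) < i k.succ := by exact_mod_cast hlt k
      have := hi1 0
      rw [Fin.val_succ, show ((l + 1 : ℕ) : ℤ) - ((k + 1 : ℕ) : ℤ) = l - k by push_cast; ring,
        ih hi.fin_tail hi1' k, Fin.tail, if_neg (by omega), if_neg (by omega), if_neg (by omega),
        if_neg (by omega)]

lemma prodR_apply_ge {i : Fin l → ℕ} (hi1 : ∀ k, 1 ≤ i k) {x : ℤ} (hx : l + 1 ≤ x) :
    x - l ≤ prodR i x := by
  induction l generalizing x with
  | zero => simp [prodR_zero]
  | succ l ih =>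
    have := ih (i := Fin.tail i) (fun k => hi1 k.succ) (x := x) (by push_cast at hx; omega)
    rw [prodR_succ, Equiv.Perm.mul_apply, r_apply (hi1 0)]
    push_cast at hx ⊢
    split_ifs <;> omega

lemma prodR_strictMonoOn {i : Fin l → ℕ} (hi1 : ∀ k, 1 ≤ i k) :
    StrictMonoOn (prodR i) (Ici (l + 1 : ℤ)) := by
  induction l with
  | zero => simpa [prodR_zero] using strictMonoOn_id
  | succ l ih =>
    intro x hx y hy hxy
    have hx' : l + 1 ≤ x := by simp only [mem_Ici] at hx; push_cast at hx; omega
    have hy' : l + 1 ≤ y := by simp only [mem_Ici] at hy; push_cast at hy; omega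
    have hi1' : ∀ k, 1 ≤ Fin.tail i k := fun k => hi1 k.succ
    have hlt := ih hi1' (mem_Ici.2 hx') (mem_Ici.2 hy') hxy
    have := prodR_apply_ge hi1' (x := x) hx'
    rw [prodR_succ, Equiv.Perm.mul_apply, Equiv.Perm.mul_apply, r_apply (hi1 0), r_apply (hi1 0)]
    simp only [mem_Ici] at hx
    push_cast at hx
    split_ifs <;> omega

lemma prodR_strictMonoOn_Icc {i : Fin l → ℕ} (hi : StrictMono i) (hi1 : ∀ k, 1 ≤ i k) (n : ℕ) :
    StrictMonoOn (prodR i) (Icc 1 n) := by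
  refine strictMonoOn_Icc_of_lt_add_one fun p hp _ => ?_
  rcases lt_trichotomy p l with hpl | rfl | hpl
  · lift p to ℕ using (by omega)
    have hk : l - p < l := by omega
    have hk' : l - (p + 1) < l := by omega
    have h1 := prodR_apply_sub hi hi1 ⟨l - p, hk⟩
    have h2 := prodR_apply_sub hi hi1 ⟨l - (p + 1), hk'⟩
    have h3 : i ⟨l - (p + 1), hk'⟩ < i ⟨l - p, hk⟩ := hi (Fin.mk_lt_mk.2 (by omega))
    rw [show (l : ℤ) - ((l - p : ℕ) : ℤ) = p by omega] at h1
    rw [show (l : ℤ) - ((l - (p + 1) : ℕ) : ℤ) = p + 1 by omega] at h2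
    rw [h1, h2]
    exact_mod_cast neg_lt_neg (Nat.cast_lt.2 h3)
  · have h1 := prodR_apply_sub hi hi1 ⟨0, by omega⟩
    have h2 := prodR_apply_ge (i := i) hi1 (x := l + 1) le_rfl
    rw [Fin.val_mk, Nat.cast_zero, sub_zero] at h1
    have := hi1 ⟨0, by omega⟩
    omega
  · exact prodR_strictMonoOn hi1 (mem_Ici.2 (by omega)) (mem_Ici.2 (by omega)) (lt_add_one p)

lemma negEntries_prodR {i : Fin l → ℕ} (hi : StrictMono i) (hi1 : ∀ k, 1 ≤ i k ∧ i k ≤ n)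
    (hl : l ≤ n) : negEntries n (prodR i) = range fun k => (i k : ℤ) := by
  ext c
  simp only [negEntries, mem_sep_iff, mem_image, mem_range]
  constructor
  · rintro ⟨hc, z, ⟨hz1, -⟩, hzc⟩
    rcases le_or_gt z l with hzl | hzl
    · lift z to ℕ using (by omega)
      have := prodR_apply_sub hi (fun k => (hi1 k).1) ⟨l - z, by omega⟩
      rw [show (l : ℤ) - ((l - z : ℕ) : ℤ) = z by omega, hzc, neg_inj] at this
      exact ⟨_, this.symm⟩
    · linarith [prodR_apply_ge (i := i) (fun k => (hi1 k).1) (x := z) (by omega), hc.1]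
  · rintro ⟨k, rfl⟩
    have := hi1 k
    exact ⟨⟨by omega, by omega⟩, l - k, ⟨by omega, by omega⟩,
      prodR_apply_sub hi (fun k => (hi1 k).1) k⟩

end ProdR

lemma Icc_diff_range_eq_range {n l l' : ℕ} {i : Fin l → ℕ} {j : Fin l' → ℕ}
    (hj1 : ∀ k, 1 ≤ j k ∧ j k ≤ n) (hdisj : ∀ k k', i k ≠ j k')
    (hcover : ∀ m : ℕ, 1 ≤ m → m ≤ n → (∃ k, i k = m) ∨ ∃ k, j k = m) :
    Icc 1 (n : ℤ) \ (range fun k => (i k : ℤ)) = range fun k => (j k : ℤ) := by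
  ext c
  simp only [mem_sdiff, mem_Icc, mem_range, not_exists]
  constructor
  · rintro ⟨hc, hnot⟩
    lift c to ℕ using (by omega)
    rcases hcover c (by exact_mod_cast hc.1) (by exact_mod_cast hc.2) with ⟨k, hk⟩ | ⟨k, hk⟩
    · exact absurd (congrArg Nat.cast hk) (hnot k)
    · exact ⟨k, congrArg Nat.cast hk⟩
  · rintro ⟨k, rfl⟩
    have := hj1 k
    exact ⟨⟨by omega, by omega⟩, fun k' h => hdisj k' k (by exact_mod_cast h)⟩

theorem stmt6_general (n : ℕ) (w : Equiv.Perm ℤ) (hw : w ∈ W n)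
    (l : ℕ) (α β σ : Equiv.Perm ℤ) (hdec : IsDecomp n w l α β σ)
    (i : Fin l → ℕ) (hi : StrictMono i) (hi1 : ∀ k, 1 ≤ i k ∧ i k ≤ n)
    (hri : α * a l = prodR i)
    (j : Fin (n - l) → ℕ) (hj : StrictMono j) (hj1 : ∀ k, 1 ≤ j k ∧ j k ≤ n)
    (hdisj : ∀ k k', i k ≠ j k')
    (hcover : ∀ m : ℕ, 1 ≤ m → m ≤ n → (∃ k, i k = m) ∨ (∃ k, j k = m))
    (α' β' σ' : Equiv.Perm ℤ)
    (hdec' : IsDecomp n (wlong n * w) (n - l) α' β' σ') :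
    α' * a (n - l) = prodR j := by
  have hm : n - l ≤ n := Nat.sub_le n l
  have hα' : α' ∈ Y n (n - l) := hdec'.2.1
  refine eq_of_strictMonoOn_of_negEntries_eq (mul_mem (Sym_le_W n hα'.1) (a_mem_W hm))
    (prodR_mem_W fun k => (hj1 k).2) (strictMonoOn_mul_a_of_mem_Y hα' hm)
    (prodR_strictMonoOn_Icc hj (fun k => (hj1 k).1) n) ?_
  calc negEntries n (α' * a (n - l)) = negEntries n (wlong n * w) := hdec'.negEntries_eq.symm
    _ = Icc 1 (n : ℤ) \ negEntries n w := negEntries_wlong_mul hw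
    _ = Icc 1 (n : ℤ) \ negEntries n (prodR i) := by rw [hdec.negEntries_eq, hri]
    _ = Icc 1 (n : ℤ) \ range fun k => (i k : ℤ) := by rw [negEntries_prodR hi hi1 hdec.1]
    _ = range fun k => (j k : ℤ) := Icc_diff_range_eq_range hj1 hdisj hcover
    _ = negEntries n (prodR j) := (negEntries_prodR hj hj1 hm).symm

/-- if `α_w a_l = r_{i_1} ⋯ r_{i_l}` (canonical decomposition of `w`,
`l = ℓ_t(w)`) then `α_{w_n w} a_{n-l} = r_{j_1} ⋯ r_{j_{n-l}}` where
`{j_1 < ⋯ < j_{n-l}}` is the complement of `{i_1 < ⋯ < i_l}` in `{1,…,n}`. -/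
theorem stmt6 (n : ℕ) (w : Equiv.Perm ℤ) (hw : w ∈ W n)
    (l : ℕ) (α β σ : Equiv.Perm ℤ) (hdec : IsDecomp n w l α β σ) (hl : l = lent n w)
    (i : Fin l → ℕ) (hi : StrictMono i) (hi1 : ∀ k, 1 ≤ i k ∧ i k ≤ n)
    (hri : α * a l = prodR i)
    (j : Fin (n - l) → ℕ) (hj : StrictMono j) (hj1 : ∀ k, 1 ≤ j k ∧ j k ≤ n)
    (hdisj : ∀ k k', i k ≠ j k')
    (hcover : ∀ m : ℕ, 1 ≤ m → m ≤ n → (∃ k, i k = m) ∨ (∃ k, j k = m))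
    (α' β' σ' : Equiv.Perm ℤ)
    (hdec' : IsDecomp n (wlong n * w) (n - l) α' β' σ')
    (hl' : n - l = lent n (wlong n * w)) :
    α' * a (n - l) = prodR j :=
  stmt6_general n w hw l α β σ hdec i hi hi1 hri j hj hj1 hdisj hcover α' β' σ' hdec'

end TypeB
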